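/- arXiv:1910.03418 — 9 statements merged into one kernel-verified Lean document; each statement's English description precedes it below -/
import Mathlib

section
/- A finite simple graph G is proportionally (2,2)-choosable if and only if G is a bipartite graph with a bipartition X, Y of its vertex set satisfying ||X| − |Y|| ≤ 1. -/
open SimpleGraph Finset

/-- The multiplicity `η_L(c)` of a color `c` in a list assignment `L`:
the number of vertices whose list contains `c`. -/
def colorMultiplicity {V : Type*} [Fintype V] (L : V → Finset ℕ) (c : ℕ) : ℕ :=
  (Finset.univ.filter (fun v => c ∈ L v)).card

/-- `f` is a proportional `L`-coloring of `G` (with list size `k`): it is a proper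
`L`-coloring and each color `c` in the palette is used `⌊η_L(c)/k⌋` or `⌈η_L(c)/k⌉` times. -/
def IsProportionalColoring {V : Type*} [Fintype V] (G : SimpleGraph V) (k : ℕ)
    (L : V → Finset ℕ) (f : V → ℕ) : Prop :=
  (∀ v, f v ∈ L v) ∧
  (∀ u v, G.Adj u v → f u ≠ f v) ∧
  (∀ c : ℕ, (∃ v, c ∈ L v) →
    ((Finset.univ.filter (fun v => f v = c)).card = colorMultiplicity L c / k ∨
     (Finset.univ.filter (fun v => f v = c)).card = (colorMultiplicity L c + k - 1) / k))

/-- `G` is proportionally `(k, ℓ)`-choosable: for every `k`-assignment `L` with palette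
contained in `{1, …, ℓ}`, `G` has a proportional `L`-coloring. -/
def ProportionallyChoosable {V : Type*} [Fintype V] (G : SimpleGraph V) (k ℓ : ℕ) : Prop :=
  ∀ L : V → Finset ℕ, (∀ v, (L v).card = k) → (∀ v, L v ⊆ Finset.Icc 1 ℓ) →
    ∃ f : V → ℕ, IsProportionalColoring G k L f

/-- `G` is proportionally `(2,2)`-choosable iff `G` is bipartite with a bipartition
`X, Y` satisfying `||X| - |Y|| ≤ 1`. -/
theorem proportionally_22_choosable_iff
    {V : Type*} [Fintype V] [DecidableEq V] [Nonempty V] (G : SimpleGraph V) :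
    ProportionallyChoosable G 2 2 ↔
      ∃ X Y : Finset V, Disjoint X Y ∧ X ∪ Y = Finset.univ ∧
        (∀ u ∈ X, ∀ v ∈ X, ¬ G.Adj u v) ∧
        (∀ u ∈ Y, ∀ v ∈ Y, ¬ G.Adj u v) ∧
        |(X.card : ℤ) - (Y.card : ℤ)| ≤ 1 := by
  constructor
  · intro h
    obtain ⟨f, hmem, hprop, hcount⟩ := h (fun _ => Finset.Icc 1 2)
      (fun v => by simp) (fun v => Finset.Subset.refl _)
    simp only [Finset.mem_Icc] at hmem
    have hmult : ∀ c, c ∈ Finset.Icc 1 2 →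
        colorMultiplicity (fun _ : V => Finset.Icc 1 2) c = Fintype.card V := by
      intro c hc
      unfold colorMultiplicity
      rw [Finset.filter_true_of_mem (fun v _ => hc), Finset.card_univ]
    have h1 := hcount 1 ⟨Classical.arbitrary V, by simp⟩
    have h2 := hcount 2 ⟨Classical.arbitrary V, by simp⟩
    rw [hmult 1 (by simp)] at h1
    rw [hmult 2 (by simp)] at h2
    refine ⟨univ.filter (fun v => f v = 1), univ.filter (fun v => f v = 2), ?_, ?_, ?_, ?_, ?_⟩
    · rw [Finset.disjoint_left]
      intro a ha hb
      simp only [Finset.mem_filter] at ha hb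
      omega
    · ext v
      have := hmem v
      simp only [Finset.mem_union, Finset.mem_filter, Finset.mem_univ, true_and, iff_true]
      omega
    · intro u hu v hv hadj
      simp only [Finset.mem_filter] at hu hv
      exact hprop u v hadj (hu.2.trans hv.2.symm)
    · intro u hu v hv hadj
      simp only [Finset.mem_filter] at hu hv
      exact hprop u v hadj (hu.2.trans hv.2.symm)
    · have hsum : (univ.filter (fun v => f v = 1)).card
          + (univ.filter (fun v => f v = 2)).card = Fintype.card V := by
        rw [← Finset.card_union_of_disjoint]
        · congr 1
          ext v
          have := hmem v
          simp only [Finset.mem_union, Finset.mem_filter, Finset.mem_univ, true_and, iff_true]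
          omega
        · rw [Finset.disjoint_left]
          intro a ha hb
          simp only [Finset.mem_filter] at ha hb
          omega
      rw [abs_le]
      constructor <;> omega
  · rintro ⟨X, Y, hdis, hun, hX, hY, habs⟩
    intro L hcard hsub
    have hL : ∀ v, L v = Finset.Icc 1 2 := by
      intro v
      apply Finset.eq_of_subset_of_card_le (hsub v)
      rw [hcard v, Nat.card_Icc]
    refine ⟨fun v => if v ∈ X then 1 else 2, ?_, ?_, ?_⟩
    · intro v
      rw [hL v]
      by_cases hv : v ∈ X <;> simp [hv]
    · intro u v hadj heq
      by_cases hu : u ∈ X <;> by_cases hv : v ∈ X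
      · exact hX u hu v hv hadj
      · simp [hu, hv] at heq
      · simp [hu, hv] at heq
      · have hu' : u ∈ Y := by
          have := Finset.mem_univ u; rw [← hun] at this
          simp only [Finset.mem_union] at this; tauto
        have hv' : v ∈ Y := by
          have := Finset.mem_univ v; rw [← hun] at this
          simp only [Finset.mem_union] at this; tauto
        exact hY u hu' v hv' hadj
    · intro c hc
      obtain ⟨v, hcv⟩ := hc
      rw [hL v, Finset.mem_Icc] at hcv
      have hmult : colorMultiplicity L c = Fintype.card V := by
        unfold colorMultiplicity
        rw [Finset.filter_true_of_mem (fun w _ => by rw [hL w, Finset.mem_Icc]; omega)]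
        exact Finset.card_univ
      have hsum : X.card + Y.card = Fintype.card V := by
        rw [← Finset.card_union_of_disjoint hdis, hun, Finset.card_univ]
      rw [abs_le] at habs
      rw [hmult]
      have hcases : c = 1 ∨ c = 2 := by omega
      rcases hcases with rfl | rfl
      · have hfil : univ.filter (fun w => (if w ∈ X then 1 else 2) = 1) = X := by
          ext w
          by_cases hw : w ∈ X <;> simp [hw]
        rw [hfil]
        omega
      · have hfil : univ.filter (fun w => (if w ∈ X then 1 else 2) = 2) = Y := by
          ext w
          have hw' := Finset.mem_univ w
          rw [← hun] at hw'
          simp only [Finset.mem_union] at hw'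
          by_cases hw : w ∈ X
          · have : w ∉ Y := Finset.disjoint_left.mp hdis hw
            simp [hw, this]
          · simp [hw]; tauto
        rw [hfil]
        omega
end

section
/- The disjoint union P_3 + P_3 of two paths on 3 vertices is not proportionally (2,4)-choosable. -/
open SimpleGraph Finset

/-- A bad 2-assignment for `P_3 + P_3`. -/
def badL : Fin 3 ⊕ Fin 3 → Finset ℕ :=
  Sum.elim ![{1,2},{1,3},{1,2}] ![{1,4},{1,3},{1,4}]

/-- `P_3 + P_3` is not proportionally `(2,4)`-choosable. -/
theorem p3_sum_p3_not_proportionally_24_choosable :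
    ¬ ProportionallyChoosable (SimpleGraph.pathGraph 3 ⊕g SimpleGraph.pathGraph 3) 2 4 := by
  intro h
  obtain ⟨f, hmem, hadj, hcnt⟩ := h badL (by decide) (by decide)
  -- membership facts
  have h0 : f (.inl 0) = 1 ∨ f (.inl 0) = 2 := by
    have := hmem (.inl 0); simp [badL] at this; tauto
  have h1 : f (.inl 1) = 1 ∨ f (.inl 1) = 3 := by
    have := hmem (.inl 1); simp [badL] at this; tauto
  have h2 : f (.inl 2) = 1 ∨ f (.inl 2) = 2 := by
    have := hmem (.inl 2); simp [badL] at this; tauto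
  have h3 : f (.inr 0) = 1 ∨ f (.inr 0) = 4 := by
    have := hmem (.inr 0); simp [badL] at this; tauto
  have h4 : f (.inr 1) = 1 ∨ f (.inr 1) = 3 := by
    have := hmem (.inr 1); simp [badL] at this; tauto
  have h5 : f (.inr 2) = 1 ∨ f (.inr 2) = 4 := by
    have := hmem (.inr 2); simp [badL] at this; tauto
  -- adjacency facts
  have ne01 : f (.inl 0) ≠ f (.inl 1) := hadj _ _ (by simp [pathGraph_adj])
  have ne12 : f (.inl 1) ≠ f (.inl 2) := hadj _ _ (by simp [pathGraph_adj])
  have ne34 : f (.inr 0) ≠ f (.inr 1) := hadj _ _ (by simp [pathGraph_adj])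
  have ne45 : f (.inr 1) ≠ f (.inr 2) := hadj _ _ (by simp [pathGraph_adj])
  -- card of filter as a sum of indicators
  have hcard : ∀ c : ℕ, ((Finset.univ : Finset (Fin 3 ⊕ Fin 3)).filter
      (fun v => f v = c)).card =
      ((if f (.inl 0) = c then 1 else 0) + (if f (.inl 1) = c then 1 else 0) +
        (if f (.inl 2) = c then 1 else 0)) +
      ((if f (.inr 0) = c then 1 else 0) + (if f (.inr 1) = c then 1 else 0) +
        (if f (.inr 2) = c then 1 else 0)) := by
    intro c
    rw [Finset.card_filter, Fintype.sum_sum_type, Fin.sum_univ_three, Fin.sum_univ_three]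
  -- multiplicities
  have c1 := hcnt 1 ⟨.inl 0, by decide⟩
  have c2 := hcnt 2 ⟨.inl 0, by decide⟩
  have c3 := hcnt 3 ⟨.inl 1, by decide⟩
  have c4 := hcnt 4 ⟨.inr 0, by decide⟩
  rw [show colorMultiplicity badL 1 = 6 from by decide, hcard] at c1
  rw [show colorMultiplicity badL 2 = 2 from by decide, hcard] at c2
  rw [show colorMultiplicity badL 3 = 2 from by decide, hcard] at c3
  rw [show colorMultiplicity badL 4 = 2 from by decide, hcard] at c4
  norm_num at c1 c2 c3 c4
  clear h hmem hadj hcnt hcard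
  rcases h0 with h0 | h0 <;> rcases h1 with h1 | h1 <;> rcases h2 with h2 | h2 <;>
    rcases h3 with h3 | h3 <;> rcases h4 with h4 | h4 <;> rcases h5 with h5 | h5 <;>
    simp_all
end

section
/- If a finite simple graph G contains a copy of the complete bipartite graph K_{1,3} as a subgraph, then G is not proportionally (2,3)-choosable. Consequently, if a finite simple graph G is proportionally (2, ℓ)-choosable for some integer ℓ ≥ 3, then the maximum degree of G is at most 2. -/
open SimpleGraph Finset

/-- Core lemma: if `G` has a vertex with three distinct neighbors, then `G` is not
proportionally `(2,3)`-choosable. -/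
lemma core_not_choosable {V : Type*} [Fintype V] (G : SimpleGraph V)
    (u a b c : V) (hab : a ≠ b) (hac : a ≠ c) (hbc : b ≠ c)
    (ha : G.Adj u a) (hb : G.Adj u b) (hc : G.Adj u c) :
    ¬ ProportionallyChoosable G 2 3 := by
  classical
  intro hP
  have hua : u ≠ a := ha.ne
  have hub : u ≠ b := hb.ne
  have huc : u ≠ c := hc.ne
  set L : V → Finset ℕ :=
    fun v => if v = u ∨ v = a ∨ v = b ∨ v = c then ({1, 2} : Finset ℕ) else ({1, 3} : Finset ℕ)
    with hL
  have hcard : ∀ v, (L v).card = 2 := by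
    intro v
    by_cases hv : v = u ∨ v = a ∨ v = b ∨ v = c <;> simp [hL, hv]
  have hsub : ∀ v, L v ⊆ Finset.Icc 1 3 := by
    intro v
    by_cases hv : v = u ∨ v = a ∨ v = b ∨ v = c <;>
      · simp only [hL, hv, if_true, if_false]
        intro x hx
        fin_cases hx <;> decide
  obtain ⟨f, hfL, hfadj, hfprop⟩ := hP L hcard hsub
  -- the multiplicity of color 2 is 4
  have hfilter2 : (Finset.univ.filter (fun v => 2 ∈ L v)) = {u, a, b, c} := by
    ext v
    by_cases hv : v = u ∨ v = a ∨ v = b ∨ v = c <;>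
      simp [hL, hv, Finset.mem_insert, Finset.mem_singleton] <;> tauto
  have hcard4 : ({u, a, b, c} : Finset V).card = 4 := by
    rw [Finset.card_insert_of_notMem (by simp [hua, hub, huc]),
      Finset.card_insert_of_notMem (by simp [hab, hac]),
      Finset.card_insert_of_notMem (by simp [hbc]), Finset.card_singleton]
  have hmult : colorMultiplicity L 2 = 4 := by
    rw [colorMultiplicity, hfilter2, hcard4]
  have hcount : (Finset.univ.filter (fun v => f v = 2)).card = 2 := by
    have h2 := hfprop 2 ⟨u, by simp [hL]⟩
    rw [hmult] at h2
    norm_num at h2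
    exact h2
  -- only u, a, b, c can be colored 2
  have hnotS : ∀ v, ¬ (v = u ∨ v = a ∨ v = b ∨ v = c) → f v ≠ 2 := by
    intro v hv h2
    have := hfL v
    simp [hL, hv] at this
    rcases this with h | h <;> omega
  have hfu : f u = 1 ∨ f u = 2 := by
    have := hfL u
    simp [hL] at this
    exact this
  rcases hfu with hfu | hfu
  · -- then a, b, c are all colored 2, count = 3
    have hleaf : ∀ v, G.Adj u v → (v = u ∨ v = a ∨ v = b ∨ v = c) → f v = 2 := by
      intro v hadj hv
      have h1 := hfL v
      simp [hL, hv] at h1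
      have h2 := hfadj u v hadj
      rcases h1 with h | h
      · exact absurd (hfu.trans h.symm) h2
      · exact h
    have hfa : f a = 2 := hleaf a ha (by tauto)
    have hfb : f b = 2 := hleaf b hb (by tauto)
    have hfc : f c = 2 := hleaf c hc (by tauto)
    have : (Finset.univ.filter (fun v => f v = 2)) = {a, b, c} := by
      ext v
      simp only [Finset.mem_filter, Finset.mem_univ, true_and, Finset.mem_insert,
        Finset.mem_singleton]
      constructor
      · intro h2
        by_cases hv : v = u ∨ v = a ∨ v = b ∨ v = c
        · rcases hv with h | h
          · rw [h] at h2; omega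
          · exact h
        · exact absurd h2 (hnotS v hv)
      · rintro (rfl | rfl | rfl) <;> assumption
    rw [this] at hcount
    rw [Finset.card_insert_of_notMem (by simp [hab, hac]),
      Finset.card_insert_of_notMem (by simp [hbc]), Finset.card_singleton] at hcount
    omega
  · -- then only u is colored 2, count = 1
    have : (Finset.univ.filter (fun v => f v = 2)) = {u} := by
      ext v
      simp only [Finset.mem_filter, Finset.mem_univ, true_and, Finset.mem_singleton]
      constructor
      · intro h2
        by_cases hv : v = u ∨ v = a ∨ v = b ∨ v = c
        · rcases hv with h | h | h | h
          · exact h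
          · rw [h] at h2; exact absurd h2 (fun hh => hfadj u a ha (hfu.trans hh.symm))
          · rw [h] at h2; exact absurd h2 (fun hh => hfadj u b hb (hfu.trans hh.symm))
          · rw [h] at h2; exact absurd h2 (fun hh => hfadj u c hc (hfu.trans hh.symm))
        · exact absurd h2 (hnotS v hv)
      · rintro rfl; exact hfu
    rw [this, Finset.card_singleton] at hcount
    omega

/-- If `G` contains a copy of `K_{1,3}` as a subgraph, then `G` is not proportionally
`(2,3)`-choosable. Consequently, if `G` is proportionally `(2,ℓ)`-choosable for some
`ℓ ≥ 3`, then `Δ(G) ≤ 2`. -/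
theorem not_proportionally_23_choosable_of_K13_and_maxDegree
    {V : Type*} [Fintype V] [Nonempty V] (G : SimpleGraph V) [DecidableRel G.Adj] :
    ((∃ φ : completeBipartiteGraph (Fin 1) (Fin 3) →g G, Function.Injective φ) →
        ¬ ProportionallyChoosable G 2 3) ∧
    (∀ ℓ : ℕ, 3 ≤ ℓ → ProportionallyChoosable G 2 ℓ → G.maxDegree ≤ 2) := by
  constructor
  · rintro ⟨φ, hφ⟩
    have hadj : ∀ i : Fin 3, G.Adj (φ (Sum.inl 0)) (φ (Sum.inr i)) := by
      intro i
      exact φ.map_adj (by simp)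
    refine core_not_choosable G (φ (Sum.inl 0)) (φ (Sum.inr 0)) (φ (Sum.inr 1)) (φ (Sum.inr 2))
      ?_ ?_ ?_ (hadj 0) (hadj 1) (hadj 2) <;>
      · intro h
        have := hφ h
        simp at this
  · classical
    intro ℓ hl hP
    have hP3 : ProportionallyChoosable G 2 3 := by
      intro L h1 h2
      exact hP L h1 (fun v => (h2 v).trans (Finset.Icc_subset_Icc le_rfl hl))
    apply SimpleGraph.maxDegree_le_of_forall_degree_le
    intro v
    by_contra hdeg
    push_neg at hdeg
    have h3 : 3 ≤ (G.neighborFinset v).card := by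
      rw [← SimpleGraph.card_neighborFinset_eq_degree] at hdeg
      omega
    obtain ⟨t, hts, htc⟩ := Finset.exists_subset_card_eq h3
    rw [Finset.card_eq_three] at htc
    obtain ⟨x, y, z, hxy, hxz, hyz, rfl⟩ := htc
    have hx : G.Adj v x := (SimpleGraph.mem_neighborFinset _ _ _).1 (hts (by simp))
    have hy : G.Adj v y := (SimpleGraph.mem_neighborFinset _ _ _).1 (hts (by simp))
    have hz : G.Adj v z := (SimpleGraph.mem_neighborFinset _ _ _).1 (hts (by simp))
    exact core_not_choosable G v x y z hxy hxz hyz hx hy hz hP3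
end

section
/- If a finite simple graph G contains a cycle, then for every integer ℓ ≥ 4, G is not proportionally (2, ℓ)-choosable. -/
open SimpleGraph Finset

lemma support_getElem' {V : Type*} {G : SimpleGraph V} {u v : V} (p : G.Walk u v) :
    ∀ (i : ℕ) (h : i < p.support.length), p.support[i] = p.getVert i := by
  induction p with
  | nil =>
    intro i h
    simp only [SimpleGraph.Walk.support_nil, List.length_singleton] at h
    obtain rfl : i = 0 := by omega
    rfl
  | cons huv q ih =>
    intro i h
    cases i with
    | zero => simp [SimpleGraph.Walk.support_cons, SimpleGraph.Walk.getVert_zero]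
    | succ i =>
      simp only [SimpleGraph.Walk.support_cons, List.getElem_cons_succ,
        SimpleGraph.Walk.getVert_cons_succ]
      exact ih i (by simpa [SimpleGraph.Walk.support_cons] using h)

lemma cycle_getVert_injOn {V : Type*} {G : SimpleGraph V} {v : V} {w : G.Walk v v}
    (hw : w.IsCycle) : ∀ i j, i < w.length → j < w.length →
      w.getVert i = w.getVert j → i = j := by
  have hnd := hw.2
  have hlen : w.support.tail.length = w.length := by
    simp [List.length_tail, SimpleGraph.Walk.length_support]
  have htail : ∀ (i : ℕ) (h : i < w.support.tail.length),
      w.support.tail[i] = w.getVert (i + 1) := by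
    intro i h
    rw [List.getElem_tail]
    exact support_getElem' w (i+1) (by simp [SimpleGraph.Walk.length_support] at h ⊢; omega)
  have key : ∀ i j (hi : i < w.length) (hj : j < w.length),
      1 ≤ i → 1 ≤ j → w.getVert i = w.getVert j → i = j := by
    intro i j hi hj h1i h1j heq
    have hi' : i - 1 < w.support.tail.length := by omega
    have hj' : j - 1 < w.support.tail.length := by omega
    have : w.support.tail[i-1] = w.support.tail[j-1] := by
      rw [htail _ hi', htail _ hj']
      have : i - 1 + 1 = i := by omega
      rw [this]
      have : j - 1 + 1 = j := by omega
      rw [this, heq]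
    have := (hnd.getElem_inj_iff).mp this
    omega
  have hzero : ∀ j, j < w.length → 1 ≤ j → w.getVert j ≠ w.getVert 0 := by
    intro j hj h1j heq
    have hl3 := hw.three_le_length
    have hn1 : w.length - 1 < w.support.tail.length := by omega
    have hj' : j - 1 < w.support.tail.length := by omega
    have hlast : w.support.tail[w.length - 1] = w.getVert 0 := by
      rw [htail _ hn1]
      have : w.length - 1 + 1 = w.length := by omega
      rw [this, SimpleGraph.Walk.getVert_length, SimpleGraph.Walk.getVert_zero]
    have : w.support.tail[j-1] = w.support.tail[w.length-1] := by
      rw [htail _ hj', hlast]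
      have : j - 1 + 1 = j := by omega
      rw [this, heq, SimpleGraph.Walk.getVert_zero]
    have := (hnd.getElem_inj_iff).mp this
    omega
  intro i j hi hj heq
  rcases Nat.eq_zero_or_pos i with rfl | h1i
  · rcases Nat.eq_zero_or_pos j with rfl | h1j
    · rfl
    · exact absurd (heq.symm) (hzero j hj h1j)
  · rcases Nat.eq_zero_or_pos j with rfl | h1j
    · exact absurd heq (hzero i hi h1i)
    · exact key i j hi hj h1i h1j heq

lemma bool_alt {b : ℕ → Bool} {n : ℕ} (h : ∀ i < n, b (i+1) = !(b i)) :
    ∀ i ≤ n, b i = if Even i then b 0 else !(b 0) := by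
  intro i
  induction i with
  | zero => simp
  | succ i ih =>
    intro hle
    rw [h i (by omega), ih (by omega)]
    rcases Nat.even_or_odd i with he | ho
    · simp [he, Nat.even_add_one, he]
    · have hne : ¬ Even i := Nat.not_even_iff_odd.mpr ho
      simp [hne, Nat.even_add_one]


/-- If `G` contains a cycle, then for every `ℓ ≥ 4`, `G` is not proportionally
`(2, ℓ)`-choosable. -/
theorem not_proportionally_2l_choosable_of_cycle
    {V : Type*} [Fintype V] (G : SimpleGraph V)
    (h : ∃ (v : V) (w : G.Walk v v), w.IsCycle) (ℓ : ℕ) (hℓ : 4 ≤ ℓ) :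
    ¬ ProportionallyChoosable G 2 ℓ := by
  classical
  obtain ⟨v, w, hw⟩ := h
  intro hch
  set n := w.length with hn
  have h3 : 3 ≤ n := hw.three_le_length
  have adj : ∀ i < n, G.Adj (w.getVert i) (w.getVert (i+1)) := fun i hi =>
    w.adj_getVert_succ hi
  have hloop : w.getVert n = w.getVert 0 := by
    rw [hn, w.getVert_length, w.getVert_zero]
  have inj := cycle_getVert_injOn hw
  rcases Nat.even_or_odd n with hev | hodd
  · -- even case
    obtain ⟨k, hk⟩ := hev
    have hk' : n = 2 * k := by omega
    have hk2 : 2 ≤ k := by omega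
    set E : Finset V := ((range n).filter (fun i => Even i)).image w.getVert with hE
    set O : Finset V := ((range n).filter (fun i => ¬ Even i)).image w.getVert with hO
    set L : V → Finset ℕ := fun u => if u ∈ E then {1,2} else if u ∈ O then {2,3} else {3,4}
      with hL
    have hmemE : ∀ u, u ∈ E ↔ ∃ i, i < n ∧ Even i ∧ w.getVert i = u := by
      intro u; simp [hE, Finset.mem_image, Finset.mem_filter, Finset.mem_range]
      tauto
    have hmemO : ∀ u, u ∈ O ↔ ∃ i, i < n ∧ ¬ Even i ∧ w.getVert i = u := by
      intro u; simp [hO, Finset.mem_image, Finset.mem_filter, Finset.mem_range]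
      tauto
    have hcard : ∀ u, (L u).card = 2 := by
      intro u; simp only [hL]; split_ifs <;> decide
    have hsub : ∀ u, L u ⊆ Finset.Icc 1 ℓ := by
      intro u x hx
      simp only [hL] at hx
      rw [Finset.mem_Icc]
      split_ifs at hx <;> simp [Finset.mem_insert, Finset.mem_singleton] at hx <;> omega
    have hEcard : E.card = k := by
      rw [hE, Finset.card_image_of_injOn]
      · have : (range n).filter (fun i => Even i) = (range k).image (fun j => 2 * j) := by
          ext i
          simp only [Finset.mem_filter, Finset.mem_range, Finset.mem_image]
          constructor
          · rintro ⟨hi, r, hr⟩; exact ⟨r, by omega, by omega⟩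
          · rintro ⟨j, hj, rfl⟩; exact ⟨by omega, j, by omega⟩
        rw [this, Finset.card_image_of_injective _ (fun a b hab => by omega),
          Finset.card_range]
      · intro a ha b hb hab
        simp only [Finset.coe_filter, Set.mem_setOf_eq, Finset.mem_range] at ha hb
        exact inj a b ha.1 hb.1 hab
    have hOcard : O.card = k := by
      rw [hO, Finset.card_image_of_injOn]
      · have : (range n).filter (fun i => ¬ Even i) = (range k).image (fun j => 2 * j + 1) := by
          ext i
          simp only [Finset.mem_filter, Finset.mem_range, Finset.mem_image]
          constructor
          · rintro ⟨hi, ho⟩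
            have : Odd i := Nat.not_even_iff_odd.mp ho
            obtain ⟨r, hr⟩ := this
            exact ⟨r, by omega, by omega⟩
          · rintro ⟨j, hj, rfl⟩
            refine ⟨by omega, ?_⟩
            simp [Nat.even_add_one, parity_simps]
        rw [this, Finset.card_image_of_injective _ (fun a b hab => by omega),
          Finset.card_range]
      · intro a ha b hb hab
        simp only [Finset.coe_filter, Set.mem_setOf_eq, Finset.mem_range] at ha hb
        exact inj a b ha.1 hb.1 hab
    have hdisj : Disjoint E O := by
      rw [Finset.disjoint_left]
      intro u huE huO
      obtain ⟨i, hi, hie, hiv⟩ := (hmemE u).mp huE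
      obtain ⟨j, hj, hjo, hjv⟩ := (hmemO u).mp huO
      have hij := inj i j hi hj (hiv.trans hjv.symm)
      exact hjo (hij ▸ hie)
    have h1L : ∀ u, 1 ∈ L u ↔ u ∈ E := by
      intro u
      simp only [hL]
      by_cases he : u ∈ E
      · rw [if_pos he]
        exact ⟨fun _ => he, fun _ => by decide⟩
      · rw [if_neg he]
        by_cases ho : u ∈ O
        · rw [if_pos ho]
          exact ⟨fun hx => absurd hx (by decide), fun hx => absurd hx he⟩
        · rw [if_neg ho]
          exact ⟨fun hx => absurd hx (by decide), fun hx => absurd hx he⟩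
    have h2L : ∀ u, 2 ∈ L u ↔ u ∈ E ∪ O := by
      intro u
      simp only [hL, Finset.mem_union]
      by_cases he : u ∈ E
      · rw [if_pos he]
        exact ⟨fun _ => Or.inl he, fun _ => by decide⟩
      · rw [if_neg he]
        by_cases ho : u ∈ O
        · rw [if_pos ho]
          exact ⟨fun _ => Or.inr ho, fun _ => by decide⟩
        · rw [if_neg ho]
          exact ⟨fun hx => absurd hx (by decide), fun hx => absurd (hx.resolve_left he) ho⟩
    have hmult2 : colorMultiplicity L 2 = 2 * k := by
      unfold colorMultiplicity
      have : Finset.univ.filter (fun v => 2 ∈ L v) = E ∪ O := by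
        ext u; simp [h2L u]
      rw [this, Finset.card_union_of_disjoint hdisj, hEcard, hOcard]; omega
    have hmult1 : colorMultiplicity L 1 = k := by
      unfold colorMultiplicity
      have : Finset.univ.filter (fun v => 1 ∈ L v) = E := by
        ext u; simp [h1L u]
      rw [this, hEcard]
    obtain ⟨f, hf1, hf2, hf3⟩ := hch L hcard hsub
    have hv0E : w.getVert 0 ∈ E := (hmemE _).mpr ⟨0, by omega, Even.zero, rfl⟩
    have hc2 : (Finset.univ.filter (fun v => f v = 2)).card = k := by
      rcases hf3 2 ⟨w.getVert 0, (h2L _).mpr (Finset.mem_union_left _ hv0E)⟩ with hh | hh <;>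
        rw [hmult2] at hh <;> omega
    -- the set of cycle indices colored 2
    set S : Finset ℕ := (range n).filter (fun i => f (w.getVert i) = 2) with hS
    have hScard : S.card = k := by
      rw [← hc2]
      apply Finset.card_bij (fun i _ => w.getVert i)
      · intro a ha
        simp only [hS, Finset.mem_filter, Finset.mem_range] at ha
        simp [ha.2]
      · intro a ha b hb hab
        simp only [hS, Finset.mem_filter, Finset.mem_range] at ha hb
        exact inj a b ha.1 hb.1 hab
      · intro u hu
        simp only [Finset.mem_filter, Finset.mem_univ, true_and] at hu
        have h2Lu : 2 ∈ L u := hu ▸ hf1 u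
        have : u ∈ E ∪ O := (h2L u).mp h2Lu
        rw [Finset.mem_union, hmemE, hmemO] at this
        rcases this with ⟨i, hi, _, hiv⟩ | ⟨i, hi, _, hiv⟩ <;>
          exact ⟨i, by simp [hS, Finset.mem_filter, Finset.mem_range, hi, hiv, hu], hiv⟩
    set g : ℕ → ℕ := fun i => (if f (w.getVert i) = 2 then 1 else 0) +
      (if f (w.getVert (i+1)) = 2 then 1 else 0) with hg
    have hsumA : ∑ i ∈ range n, (if f (w.getVert i) = 2 then 1 else 0) = k := by
      rw [← hScard, hS, Finset.card_filter]
    have hsumB : ∑ i ∈ range n, (if f (w.getVert (i+1)) = 2 then 1 else 0) = k := by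
      have e1 := Finset.sum_range_succ' (fun i => if f (w.getVert i) = 2 then 1 else 0) n
      have e2 := Finset.sum_range_succ (fun i => if f (w.getVert i) = 2 then 1 else 0) n
      have e3 : (if f (w.getVert n) = 2 then 1 else 0) =
          (if f (w.getVert 0) = 2 then (1:ℕ) else 0) := by rw [hloop]
      omega
    have hsum : ∑ i ∈ range n, g i = 2 * k := by
      simp only [hg]
      rw [Finset.sum_add_distrib, hsumA, hsumB]; omega
    have hle1 : ∀ i ∈ range n, g i ≤ 1 := by
      intro i hi
      simp only [Finset.mem_range] at hi
      simp only [hg]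
      split_ifs with ha hb
      · exact absurd (ha.trans hb.symm) (hf2 _ _ (adj i hi))
      all_goals omega
    have hall : ∀ i ∈ range n, g i = 1 := by
      by_contra hcon
      push_neg at hcon
      obtain ⟨i0, hi0, hne⟩ := hcon
      have hlt : g i0 < 1 := lt_of_le_of_ne (hle1 i0 hi0) hne
      have : ∑ i ∈ range n, g i < ∑ i ∈ range n, 1 :=
        Finset.sum_lt_sum hle1 ⟨i0, hi0, hlt⟩
      simp only [Finset.sum_const, Finset.card_range, smul_eq_mul, mul_one] at this
      omega
    set b : ℕ → Bool := fun i => decide (f (w.getVert i) = 2) with hb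
    have halt : ∀ i < n, b (i+1) = !(b i) := by
      intro i hi
      have := hall i (Finset.mem_range.mpr hi)
      simp only [hg] at this
      by_cases h1 : f (w.getVert i) = 2 <;> by_cases h2 : f (w.getVert (i+1)) = 2 <;>
        simp [h1, h2, hb] at this ⊢
    have hpar := bool_alt halt
    have hc1 : (Finset.univ.filter (fun v => f v = 1)).card = k / 2 ∨
        (Finset.univ.filter (fun v => f v = 1)).card = (k + 1) / 2 := by
      rcases hf3 1 ⟨w.getVert 0, (h1L _).mpr hv0E⟩ with hh | hh <;>
        rw [hmult1] at hh
      · left; omega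
      · right; omega
    cases hbc : b 0
    · -- b 0 = false : every even vertex colored 1, card = k, too big
      have hfilt : Finset.univ.filter (fun v => f v = 1) = E := by
        ext u
        simp only [Finset.mem_filter, Finset.mem_univ, true_and]
        constructor
        · intro hu
          have : 1 ∈ L u := hu ▸ hf1 u
          exact (h1L u).mp this
        · intro huE
          obtain ⟨i, hi, hie, rfl⟩ := (hmemE u).mp huE
          have hbi : b i = false := by
            rw [hpar i (by omega)]
            simp [hie, hbc]
          have hne2 : f (w.getVert i) ≠ 2 := by
            simpa [hb] using hbi
          have : f (w.getVert i) ∈ L (w.getVert i) := hf1 _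
          rw [hL] at this
          simp only [if_pos huE] at this
          simp only [Finset.mem_insert, Finset.mem_singleton] at this
          tauto
      rw [hfilt, hEcard] at hc1
      omega
    · -- b 0 = true : no vertex colored 1, card = 0, too small
      have hfilt : Finset.univ.filter (fun v => f v = 1) = ∅ := by
        rw [Finset.eq_empty_iff_forall_notMem]
        intro u hu
        simp only [Finset.mem_filter, Finset.mem_univ, true_and] at hu
        have : 1 ∈ L u := hu ▸ hf1 u
        have huE := (h1L u).mp this
        obtain ⟨i, hi, hie, rfl⟩ := (hmemE u).mp huE
        have hbi : b i = true := by
          rw [hpar i (by omega)]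
          simp [hie, hbc]
        have : f (w.getVert i) = 2 := by simpa [hb] using hbi
        omega
      rw [hfilt] at hc1
      simp only [Finset.card_empty] at hc1
      omega
  · -- odd case
    have hcard12 : ({1,2} : Finset ℕ).card = 2 := by decide
    obtain ⟨f, hf1, hf2, _⟩ := hch (fun _ => ({1,2} : Finset ℕ))
      (fun _ => hcard12)
      (fun u x hx => by
        simp only [Finset.mem_insert, Finset.mem_singleton] at hx
        rw [Finset.mem_Icc]; omega)
    set b : ℕ → Bool := fun i => decide (f (w.getVert i) = 1) with hb
    have hmem : ∀ u, f u = 1 ∨ f u = 2 := by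
      intro u
      have := hf1 u
      simp only [Finset.mem_insert, Finset.mem_singleton] at this
      tauto
    have halt : ∀ i < n, b (i+1) = !(b i) := by
      intro i hi
      have hne := hf2 _ _ (adj i hi)
      rcases hmem (w.getVert i) with h1 | h1 <;> rcases hmem (w.getVert (i+1)) with h2 | h2
      · exact absurd (h2.trans h1.symm) hne.symm
      · simp [hb, h1, h2]
      · simp [hb, h1, h2]
      · exact absurd (h2.trans h1.symm) hne.symm
    have hpar := bool_alt halt
    have hbn := hpar n le_rfl
    have hnotev : ¬ Even n := Nat.not_even_iff_odd.mpr hodd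
    rw [if_neg hnotev] at hbn
    have hbn0 : b n = b 0 := by simp only [hb]; rw [hloop]
    rw [hbn0] at hbn
    cases h0 : b 0 <;> rw [h0] at hbn <;> simp at hbn
end

section
/- If a finite simple graph G contains a copy of K_{1,2} + K_{1,2} (the disjoint union of two paths on 3 vertices) as a subgraph, then for every integer ℓ ≥ 5, G is not proportionally (2, ℓ)-choosable. -/
open SimpleGraph Finset

def gadgetLists : Fin 3 ⊕ Fin 3 → Finset ℕ
  | .inl i => if i = 1 then {1,3} else {1,2}
  | .inr i => if i = 1 then {1,3} else {1,4}

/-- If `G` contains a copy of `K_{1,2} + K_{1,2}` (i.e. `P_3 + P_3`) as a subgraph, then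
for every `ℓ ≥ 5`, `G` is not proportionally `(2, ℓ)`-choosable. -/
theorem not_proportionally_2l_choosable_of_two_K12
    {V : Type*} [Fintype V] (G : SimpleGraph V)
    (h : ∃ φ : (SimpleGraph.pathGraph 3 ⊕g SimpleGraph.pathGraph 3) →g G,
        Function.Injective φ)
    (ℓ : ℕ) (hℓ : 5 ≤ ℓ) :
    ¬ ProportionallyChoosable G 2 ℓ := by
  classical
  rintro hPC
  obtain ⟨φ, hφ⟩ := h
  let L : V → Finset ℕ := fun v => if h : ∃ x, φ x = v then gadgetLists h.choose else {4,5}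
  have hL : ∀ x, L (φ x) = gadgetLists x := by
    intro x
    have hx : ∃ y, φ y = φ x := ⟨x, rfl⟩
    simp only [L, dif_pos hx]
    congr 1
    exact hφ hx.choose_spec
  have hLout : ∀ v, (¬ ∃ x, φ x = v) → L v = {4,5} := by
    intro v hv; simp only [L, dif_neg hv]
  have hcard : ∀ v, (L v).card = 2 := by
    intro v
    by_cases hv : ∃ x, φ x = v
    · obtain ⟨x, rfl⟩ := hv
      rw [hL]
      rcases x with i | i <;> fin_cases i <;> decide
    · rw [hLout v hv]; decide
  have hsub : ∀ v, L v ⊆ Finset.Icc 1 ℓ := by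
    intro v
    have h5 : ({1,2,3,4,5} : Finset ℕ) ⊆ Finset.Icc 1 ℓ := by
      intro c hc
      simp only [Finset.mem_insert, Finset.mem_singleton] at hc
      rw [Finset.mem_Icc]
      omega
    refine subset_trans ?_ h5
    by_cases hv : ∃ x, φ x = v
    · obtain ⟨x, rfl⟩ := hv
      rw [hL]
      rcases x with i | i <;> fin_cases i <;> decide
    · rw [hLout v hv]; decide
  obtain ⟨f, hmem, hadj, hcnt⟩ := hPC L hcard hsub
  set E : (Fin 3 ⊕ Fin 3) ↪ V := ⟨φ, hφ⟩ with hE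
  -- counting reduction for colors 1,2,3
  have hcount : ∀ c : ℕ, c ≠ 4 → c ≠ 5 →
      (Finset.univ.filter (fun v => f v = c)).card
        = (Finset.univ.filter (fun x : Fin 3 ⊕ Fin 3 => f (φ x) = c)).card := by
    intro c h4 h5
    have : Finset.univ.filter (fun v => f v = c)
        = (Finset.univ.map E).filter (fun v => f v = c) := by
      ext v
      simp only [Finset.mem_filter, Finset.mem_univ, true_and, Finset.mem_map]
      constructor
      · intro hv
        refine ⟨?_, hv⟩
        by_contra hni
        have : ¬ ∃ x, φ x = v := by
          intro ⟨x, hx⟩; exact hni ⟨x, hx⟩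
        have hm := hmem v
        rw [hLout v this] at hm
        simp only [Finset.mem_insert, Finset.mem_singleton] at hm
        rcases hm with hm | hm <;> rw [hv] at hm <;> omega
      · exact fun hv => hv.2
    rw [this, Finset.filter_map, Finset.card_map]
    rfl
  have hmult : ∀ c : ℕ, c ≠ 4 → c ≠ 5 →
      colorMultiplicity L c
        = (Finset.univ.filter (fun x : Fin 3 ⊕ Fin 3 => c ∈ gadgetLists x)).card := by
    intro c h4 h5
    have : Finset.univ.filter (fun v => c ∈ L v)
        = (Finset.univ.map E).filter (fun v => c ∈ L v) := by
      ext v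
      simp only [Finset.mem_filter, Finset.mem_univ, true_and, Finset.mem_map]
      constructor
      · intro hv
        refine ⟨?_, hv⟩
        by_contra hni
        have hne : ¬ ∃ x, φ x = v := by
          intro ⟨x, hx⟩; exact hni ⟨x, hx⟩
        rw [hLout v hne] at hv
        simp only [Finset.mem_insert, Finset.mem_singleton] at hv
        rcases hv with hv | hv <;> [exact h4 hv; exact h5 hv]
      · exact fun hv => hv.2
    unfold colorMultiplicity
    rw [this, Finset.filter_map, Finset.card_map]
    congr 1
    apply Finset.filter_congr
    intro x _
    simp only [Function.comp, hE, Function.Embedding.coeFn_mk, hL]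
  have m1 : colorMultiplicity L 1 = 6 := by
    rw [hmult 1 (by norm_num) (by norm_num)]; decide
  have m2 : colorMultiplicity L 2 = 2 := by
    rw [hmult 2 (by norm_num) (by norm_num)]; decide
  have m3 : colorMultiplicity L 3 = 2 := by
    rw [hmult 3 (by norm_num) (by norm_num)]; decide
  have c1 := hcnt 1 ⟨φ (Sum.inl 0), by rw [hL]; decide⟩
  have c2 := hcnt 2 ⟨φ (Sum.inl 0), by rw [hL]; decide⟩
  have c3 := hcnt 3 ⟨φ (Sum.inl 1), by rw [hL]; decide⟩
  rw [m1, hcount 1 (by norm_num) (by norm_num)] at c1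
  rw [m2, hcount 2 (by norm_num) (by norm_num)] at c2
  rw [m3, hcount 3 (by norm_num) (by norm_num)] at c3
  norm_num at c1 c2 c3
  rw [Finset.card_filter] at c1 c2 c3
  simp only [Fintype.sum_sum_type, Fin.sum_univ_three] at c1 c2 c3
  have ha0 := hmem (φ (Sum.inl 0)); rw [hL] at ha0
  have ha1 := hmem (φ (Sum.inl 1)); rw [hL] at ha1
  have ha2 := hmem (φ (Sum.inl 2)); rw [hL] at ha2
  have hb0 := hmem (φ (Sum.inr 0)); rw [hL] at hb0
  have hb1 := hmem (φ (Sum.inr 1)); rw [hL] at hb1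
  have hb2 := hmem (φ (Sum.inr 2)); rw [hL] at hb2
  simp only [gadgetLists, Finset.mem_insert, Finset.mem_singleton,
    show ((0:Fin 3) = 1) = False by simp, show ((1:Fin 3) = 1) = True by simp,
    show ((2:Fin 3) = 1) = False by simp, if_true, if_false] at ha0 ha1 ha2 hb0 hb1 hb2
  have hA01 : f (φ (Sum.inl 0)) ≠ f (φ (Sum.inl 1)) :=
    hadj _ _ (φ.map_adj (by simp [SimpleGraph.sum_adj, pathGraph_adj]))
  have hA12 : f (φ (Sum.inl 1)) ≠ f (φ (Sum.inl 2)) :=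
    hadj _ _ (φ.map_adj (by simp [SimpleGraph.sum_adj, pathGraph_adj]))
  have hB01 : f (φ (Sum.inr 0)) ≠ f (φ (Sum.inr 1)) :=
    hadj _ _ (φ.map_adj (by simp [SimpleGraph.sum_adj, pathGraph_adj]))
  have hB12 : f (φ (Sum.inr 1)) ≠ f (φ (Sum.inr 2)) :=
    hadj _ _ (φ.map_adj (by simp [SimpleGraph.sum_adj, pathGraph_adj]))
  clear hcnt hmem hadj hcount hmult m1 m2 m3 hcard hsub hL hLout hℓ hPC hE
  clear_value E L
  clear E L hφ
  generalize f (φ (Sum.inl 0)) = a0 at *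
  generalize f (φ (Sum.inl 1)) = a1 at *
  generalize f (φ (Sum.inl 2)) = a2 at *
  generalize f (φ (Sum.inr 0)) = b0 at *
  generalize f (φ (Sum.inr 1)) = b1 at *
  generalize f (φ (Sum.inr 2)) = b2 at *
  clear f φ G
  rcases ha0 with h0 | h0 <;> rcases ha1 with h1 | h1 <;> rcases ha2 with h2 | h2 <;>
    rcases hb0 with h3 | h3 <;> rcases hb1 with h4 | h4 <;> rcases hb2 with h5 | h5 <;>
    subst h0 <;> subst h1 <;> subst h2 <;> subst h3 <;> subst h4 <;> subst h5 <;>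
    simp_all
end

section
/- Suppose 1 ≤ k ≤ ℓ, G is a finite simple graph, and H is a spanning subgraph of G (a subgraph with V(H) = V(G)). If H is not proportionally (k, ℓ)-choosable, then G is not proportionally (k, ℓ)-choosable. -/
open SimpleGraph Finset

/-- If a spanning subgraph `H` of `G` is not proportionally `(k, ℓ)`-choosable, then
neither is `G`. -/
theorem not_proportionallyChoosable_of_spanning_subgraph
    {V : Type*} [Fintype V] [Nonempty V] (G H : SimpleGraph V) (k ℓ : ℕ)
    (hk : 1 ≤ k) (hkl : k ≤ ℓ) (hHG : H ≤ G)
    (h : ¬ ProportionallyChoosable H k ℓ) :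
    ¬ ProportionallyChoosable G k ℓ := by
  intro hG
  apply h
  intro L hcard hsub
  obtain ⟨f, hf1, hf2, hf3⟩ := hG L hcard hsub
  exact ⟨f, hf1, fun u v huv => hf2 u v (hHG huv), hf3⟩
end

section
/- Suppose 1 ≤ k ≤ ℓ. If a finite simple graph G is not proportionally (k, ℓ)-choosable, then the disjoint union G + K_k of G with a complete graph on k vertices is not proportionally (k, ℓ)-choosable. -/
open SimpleGraph Finset

lemma card_filter_sum_split {α β} [Fintype α] [Fintype β] (p : α ⊕ β → Prop) [DecidablePred p] :
    (univ.filter p).card =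
      (univ.filter (fun a => p (Sum.inl a))).card + (univ.filter (fun b => p (Sum.inr b))).card := by
  rw [← Finset.card_toLeft_add_card_toRight]
  congr 1 <;> · apply Finset.card_nbij id <;> intro x <;> simp +contextual [Set.InjOn]

/-- If `G` is not proportionally `(k, ℓ)`-choosable, then neither is `G + K_k`. -/
theorem not_proportionallyChoosable_sum_completeGraph
    {V : Type*} [Fintype V] [Nonempty V] (G : SimpleGraph V) (k ℓ : ℕ)
    (hk : 1 ≤ k) (hkl : k ≤ ℓ) (h : ¬ ProportionallyChoosable G k ℓ) :
    ¬ ProportionallyChoosable (G ⊕g completeGraph (Fin k)) k ℓ := by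
  intro hc
  apply h
  intro L hLcard hLsub
  set L' : V ⊕ Fin k → Finset ℕ := Sum.elim L (fun _ => Finset.Icc 1 k) with hL'
  obtain ⟨f, hf1, hf2, hf3⟩ := hc L'
    (by rintro (v | w) <;> simp [L', hLcard, Nat.card_Icc])
    (by rintro (v | w)
        · exact hLsub v
        · exact Finset.Icc_subset_Icc le_rfl hkl)
  -- the coloring of the K_k part is a bijection onto Icc 1 k
  have hmem : ∀ w : Fin k, f (Sum.inr w) ∈ Finset.Icc 1 k := fun w => hf1 (Sum.inr w)
  have hinj : Function.Injective (fun w : Fin k => f (Sum.inr w)) := by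
    intro a b hab
    by_contra hne
    exact hf2 (Sum.inr a) (Sum.inr b) (by simp [hne]) hab
  have hbij : Function.Bijective
      (fun w : Fin k => (⟨f (Sum.inr w), hmem w⟩ : (Finset.Icc 1 k : Finset ℕ))) := by
    rw [Fintype.bijective_iff_injective_and_card]
    constructor
    · intro a b hab
      exact hinj (by simpa using congrArg Subtype.val hab)
    · simp [Nat.card_Icc]
  have hcount : ∀ c : ℕ,
      (univ.filter (fun w : Fin k => f (Sum.inr w) = c)).card
        = if c ∈ Finset.Icc 1 k then 1 else 0 := by
    intro c
    split_ifs with hci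
    · obtain ⟨w, hw⟩ := hbij.surjective ⟨c, hci⟩
      rw [Finset.card_eq_one]
      refine ⟨w, ?_⟩
      ext w'
      simp only [Finset.mem_filter, Finset.mem_univ, true_and, Finset.mem_singleton]
      constructor
      · intro hw'
        apply hinj
        show f (Sum.inr w') = f (Sum.inr w)
        rw [hw']
        exact (congrArg Subtype.val hw).symm
      · rintro rfl; exact congrArg Subtype.val hw
    · rw [Finset.card_eq_zero]
      ext w
      simp only [Finset.mem_filter, Finset.mem_univ, true_and, Finset.notMem_empty, iff_false]
      intro hw
      exact hci (hw ▸ hmem w)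
  have hmult : ∀ c : ℕ, colorMultiplicity L' c
      = colorMultiplicity L c + if c ∈ Finset.Icc 1 k then k else 0 := by
    intro c
    unfold colorMultiplicity
    rw [card_filter_sum_split (fun x => c ∈ L' x)]
    congr 1
    split_ifs with hci
    · simp [L', hci]
    · simp [L', hci]
  refine ⟨fun v => f (Sum.inl v), fun v => hf1 (Sum.inl v),
    fun u v huv => hf2 _ _ (by simp [huv]), ?_⟩
  intro c hcL
  beta_reduce
  have hc3 := hf3 c ⟨Sum.inl hcL.choose, by simpa [L'] using hcL.choose_spec⟩
  have hsplit := card_filter_sum_split (fun x => f x = c)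
  rw [hcount c, hmult c] at *
  by_cases hci : c ∈ Finset.Icc 1 k
  · simp only [hci, if_true] at hc3 hsplit
    have h1 : (colorMultiplicity L c + k) / k = colorMultiplicity L c / k + 1 :=
      Nat.add_div_right _ hk
    have h2 : (colorMultiplicity L c + k + k - 1) / k = (colorMultiplicity L c + k - 1) / k + 1 := by
      have : colorMultiplicity L c + k + k - 1 = (colorMultiplicity L c + k - 1) + k := by omega
      rw [this, Nat.add_div_right _ hk]
    rw [hsplit, h1, h2] at hc3
    omega
  · simp only [hci, if_false, add_zero] at hc3 hsplit
    rw [hsplit] at hc3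
    simpa using hc3
end

section
/- For every integer n ≥ 8, the path P_n on n vertices is not proportionally (2,4)-choosable. -/
open SimpleGraph Finset

private def gl8 : List (Finset ℕ) := [{1,2},{1,2},{1,2},{1,3},{1,2},{1,4},{1,3},{1,4}]
private def gl9 : List (Finset ℕ) := [{1,2},{1,3},{1,2},{1,3},{1,2},{1,4},{1,3},{1,4},{2,3}]

private def L8 (i : ℕ) : Finset ℕ := gl8.getD i {3,4}
private def L9 (i : ℕ) : Finset ℕ := gl9.getD i {3,4}

private lemma L8_pad (i : ℕ) (h : 8 ≤ i) : L8 i = {3,4} := by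
  rw [L8, List.getD_eq_default]
  simpa [gl8] using h

private lemma L9_pad (i : ℕ) (h : 9 ≤ i) : L9 i = {3,4} := by
  rw [L9, List.getD_eq_default]
  simpa [gl9] using h

private lemma L8_card (i : ℕ) : (L8 i).card = 2 := by
  match i with
  | 0 | 1 | 2 | 3 | 4 | 5 | 6 | 7 => decide
  | (i+8) => rw [L8_pad _ (by omega)]; decide

private lemma L9_card (i : ℕ) : (L9 i).card = 2 := by
  match i with
  | 0 | 1 | 2 | 3 | 4 | 5 | 6 | 7 | 8 => decide
  | (i+9) => rw [L9_pad _ (by omega)]; decide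

private lemma L8_sub (i : ℕ) : L8 i ⊆ Finset.Icc 1 4 := by
  match i with
  | 0 | 1 | 2 | 3 | 4 | 5 | 6 | 7 => decide
  | (i+8) => rw [L8_pad _ (by omega)]; decide

private lemma L9_sub (i : ℕ) : L9 i ⊆ Finset.Icc 1 4 := by
  match i with
  | 0 | 1 | 2 | 3 | 4 | 5 | 6 | 7 | 8 => decide
  | (i+9) => rw [L9_pad _ (by omega)]; decide

/-- transfer a count over `Fin n` to a count over `range n`. -/
private lemma filt {α : Type*} (n : ℕ) (f : Fin n → α) (F : ℕ → α)
    (hF : ∀ v : Fin n, F v.val = f v) (p : α → Prop) [DecidablePred p] :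
    (Finset.univ.filter (fun v => p (f v))).card = ((range n).filter (fun i => p (F i))).card := by
  rw [Finset.card_filter, Finset.card_filter,
    ← Fin.sum_univ_eq_sum_range (fun i => if p (F i) then 1 else 0) n]
  exact Finset.sum_congr rfl fun v _ => by rw [hF v]

private lemma splitCard (m n : ℕ) (hm : m ≤ n) (p : ℕ → Prop) [DecidablePred p] :
    ((range n).filter p).card = ((range m).filter p).card + ((Ico m n).filter p).card := by
  rw [range_eq_Ico, ← Finset.Ico_union_Ico_eq_Ico (Nat.zero_le m) hm, filter_union,
    card_union_of_disjoint (disjoint_filter_filter (Ico_disjoint_Ico_consecutive 0 m n)),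
    ← range_eq_Ico]

private lemma padCount (g : ℕ → ℕ) (a : ℕ) : ∀ t : ℕ,
    (∀ i, a ≤ i → i < a + 2*t → (g i = 3 ∨ g i = 4)) →
    (∀ i, a ≤ i → i + 1 < a + 2*t → g i ≠ g (i+1)) →
    ((Ico a (a+2*t)).filter (fun i => g i = 3)).card = t ∧
    ((Ico a (a+2*t)).filter (fun i => g i = 4)).card = t := by
  intro t
  induction t with
  | zero => simp
  | succ t ih =>
    intro hmem hne
    obtain ⟨ih3, ih4⟩ := ih (fun i h1 h2 => hmem i h1 (by omega))
      (fun i h1 h2 => hne i h1 (by omega))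
    have hsplit : Ico a (a+2*(t+1)) = Ico a (a+2*t) ∪ Ico (a+2*t) (a+2*(t+1)) :=
      (Finset.Ico_union_Ico_eq_Ico (by omega) (by omega)).symm
    have hpair : Ico (a+2*t) (a+2*(t+1)) = {a+2*t, a+2*t+1} := by
      ext x
      simp only [Finset.mem_Ico, Finset.mem_insert, Finset.mem_singleton]
      omega
    have hd : Disjoint (Ico a (a+2*t)) (Ico (a+2*t) (a+2*(t+1))) :=
      Ico_disjoint_Ico_consecutive a (a+2*t) (a+2*(t+1))
    have hm1 := hmem (a+2*t) (by omega) (by omega)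
    have hm2 := hmem (a+2*t+1) (by omega) (by omega)
    have hne1 := hne (a+2*t) (by omega) (by omega)
    have hx : (a+2*t) ≠ (a+2*t+1) := by omega
    constructor <;>
      rw [hsplit, filter_union,
        card_union_of_disjoint (disjoint_filter_filter hd), hpair] <;>
      [rw [ih3]; rw [ih4]] <;>
      rcases hm1 with h|h <;> rcases hm2 with h'|h' <;>
      simp [Finset.filter_insert, Finset.filter_singleton, h, h', hx] <;>
      omega


private lemma gadget8 : ∀ x0 ∈ ({1,2}:Finset ℕ), ∀ x1 ∈ ({1,2}:Finset ℕ), ∀ x2 ∈ ({1,2}:Finset ℕ), ∀ x3 ∈ ({1,3}:Finset ℕ), ∀ x4 ∈ ({1,2}:Finset ℕ), ∀ x5 ∈ ({1,4}:Finset ℕ), ∀ x6 ∈ ({1,3}:Finset ℕ), ∀ x7 ∈ ({1,4}:Finset ℕ),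
    x0 ≠ x1 → x1 ≠ x2 → x2 ≠ x3 → x3 ≠ x4 → x4 ≠ x5 → x5 ≠ x6 → x6 ≠ x7 →
    (if x0 = 1 then 1 else 0) + (if x1 = 1 then 1 else 0) + (if x2 = 1 then 1 else 0) + (if x3 = 1 then 1 else 0) + (if x4 = 1 then 1 else 0) + (if x5 = 1 then 1 else 0) + (if x6 = 1 then 1 else 0) + (if x7 = 1 then 1 else 0) = 4 →
    (if x0 = 2 then 1 else 0) + (if x1 = 2 then 1 else 0) + (if x2 = 2 then 1 else 0) + (if x3 = 2 then 1 else 0) + (if x4 = 2 then 1 else 0) + (if x5 = 2 then 1 else 0) + (if x6 = 2 then 1 else 0) + (if x7 = 2 then 1 else 0) = 2 →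
    (if x0 = 3 then 1 else 0) + (if x1 = 3 then 1 else 0) + (if x2 = 3 then 1 else 0) + (if x3 = 3 then 1 else 0) + (if x4 = 3 then 1 else 0) + (if x5 = 3 then 1 else 0) + (if x6 = 3 then 1 else 0) + (if x7 = 3 then 1 else 0) = 1 →
    (if x0 = 4 then 1 else 0) + (if x1 = 4 then 1 else 0) + (if x2 = 4 then 1 else 0) + (if x3 = 4 then 1 else 0) + (if x4 = 4 then 1 else 0) + (if x5 = 4 then 1 else 0) + (if x6 = 4 then 1 else 0) + (if x7 = 4 then 1 else 0) = 1 →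
    False := by decide

private lemma gadget9 : ∀ x0 ∈ ({1,2}:Finset ℕ), ∀ x1 ∈ ({1,3}:Finset ℕ), ∀ x2 ∈ ({1,2}:Finset ℕ), ∀ x3 ∈ ({1,3}:Finset ℕ), ∀ x4 ∈ ({1,2}:Finset ℕ), ∀ x5 ∈ ({1,4}:Finset ℕ), ∀ x6 ∈ ({1,3}:Finset ℕ), ∀ x7 ∈ ({1,4}:Finset ℕ), ∀ x8 ∈ ({2,3}:Finset ℕ),
    x0 ≠ x1 → x1 ≠ x2 → x2 ≠ x3 → x3 ≠ x4 → x4 ≠ x5 → x5 ≠ x6 → x6 ≠ x7 → x7 ≠ x8 →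
    (if x0 = 1 then 1 else 0) + (if x1 = 1 then 1 else 0) + (if x2 = 1 then 1 else 0) + (if x3 = 1 then 1 else 0) + (if x4 = 1 then 1 else 0) + (if x5 = 1 then 1 else 0) + (if x6 = 1 then 1 else 0) + (if x7 = 1 then 1 else 0) + (if x8 = 1 then 1 else 0) = 4 →
    (if x0 = 2 then 1 else 0) + (if x1 = 2 then 1 else 0) + (if x2 = 2 then 1 else 0) + (if x3 = 2 then 1 else 0) + (if x4 = 2 then 1 else 0) + (if x5 = 2 then 1 else 0) + (if x6 = 2 then 1 else 0) + (if x7 = 2 then 1 else 0) + (if x8 = 2 then 1 else 0) = 2 →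
    (if x0 = 3 then 1 else 0) + (if x1 = 3 then 1 else 0) + (if x2 = 3 then 1 else 0) + (if x3 = 3 then 1 else 0) + (if x4 = 3 then 1 else 0) + (if x5 = 3 then 1 else 0) + (if x6 = 3 then 1 else 0) + (if x7 = 3 then 1 else 0) + (if x8 = 3 then 1 else 0) = 2 →
    (if x0 = 4 then 1 else 0) + (if x1 = 4 then 1 else 0) + (if x2 = 4 then 1 else 0) + (if x3 = 4 then 1 else 0) + (if x4 = 4 then 1 else 0) + (if x5 = 4 then 1 else 0) + (if x6 = 4 then 1 else 0) + (if x7 = 4 then 1 else 0) + (if x8 = 4 then 1 else 0) = 1 →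
    False := by decide

private lemma even_case (t : ℕ) :
    ¬ ProportionallyChoosable (SimpleGraph.pathGraph (8+2*t)) 2 4 := by
  intro h
  obtain ⟨f, hmem, hadj, hcnt⟩ := h (fun v => L8 v.val) (fun v => L8_card v) (fun v => L8_sub v)
  obtain ⟨F, hFeq⟩ : ∃ F : ℕ → ℕ, ∀ v : Fin (8+2*t), F v.val = f v :=
    ⟨fun i => if h : i < 8+2*t then f ⟨i, h⟩ else 0, fun v => dif_pos v.isLt⟩
  have hFmem : ∀ i (hi : i < 8+2*t), F i ∈ L8 i := by
    intro i hi
    have h2 := hmem ⟨i, hi⟩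
    rwa [← hFeq ⟨i, hi⟩] at h2
  have hFadj : ∀ i, i + 1 < 8+2*t → F i ≠ F (i+1) := by
    intro i hi
    have h2 := hadj ⟨i, by omega⟩ ⟨i+1, hi⟩ (by rw [SimpleGraph.pathGraph_adj]; left; rfl)
    rw [← hFeq ⟨i, by omega⟩, ← hFeq ⟨i+1, hi⟩] at h2
    exact h2
  have hFpad : ∀ i, 8 ≤ i → i < 8+2*t → (F i = 3 ∨ F i = 4) := by
    intro i h1 h2
    have h3 := hFmem i h2
    rw [L8_pad i h1] at h3
    simpa using h3
  have hcard : ∀ c : ℕ, (Finset.univ.filter (fun v => f v = c)).card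
      = ((range (8+2*t)).filter (fun i => F i = c)).card :=
    fun c => filt _ f F hFeq (fun x => x = c)
  have hmul : ∀ c : ℕ, colorMultiplicity (fun v : Fin (8+2*t) => L8 v.val) c
      = ((range (8+2*t)).filter (fun i => c ∈ L8 i)).card :=
    fun c => filt _ _ L8 (fun v => rfl) (fun s => c ∈ s)
  have p1 : ((Ico 8 (8+2*t)).filter (fun i => F i = 1)).card = 0 := by
    rw [Finset.card_eq_zero, Finset.filter_eq_empty_iff]
    intro i hi
    rcases hFpad i (mem_Ico.mp hi).1 (mem_Ico.mp hi).2 with h|h <;> omega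
  have p2 : ((Ico 8 (8+2*t)).filter (fun i => F i = 2)).card = 0 := by
    rw [Finset.card_eq_zero, Finset.filter_eq_empty_iff]
    intro i hi
    rcases hFpad i (mem_Ico.mp hi).1 (mem_Ico.mp hi).2 with h|h <;> omega
  obtain ⟨p3, p4⟩ := padCount F 8 t hFpad (fun i h1 h2 => hFadj i (by omega))
  have q1 : ((Ico 8 (8+2*t)).filter (fun i => (1:ℕ) ∈ L8 i)).card = 0 := by
    rw [Finset.card_eq_zero, Finset.filter_eq_empty_iff]
    intro i hi
    rw [L8_pad i (mem_Ico.mp hi).1]; decide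
  have q2 : ((Ico 8 (8+2*t)).filter (fun i => (2:ℕ) ∈ L8 i)).card = 0 := by
    rw [Finset.card_eq_zero, Finset.filter_eq_empty_iff]
    intro i hi
    rw [L8_pad i (mem_Ico.mp hi).1]; decide
  have q3 : ((Ico 8 (8+2*t)).filter (fun i => (3:ℕ) ∈ L8 i)).card = 2*t := by
    rw [Finset.filter_true_of_mem, Nat.card_Ico]
    · omega
    · intro i hi; rw [L8_pad i (mem_Ico.mp hi).1]; decide
  have q4 : ((Ico 8 (8+2*t)).filter (fun i => (4:ℕ) ∈ L8 i)).card = 2*t := by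
    rw [Finset.filter_true_of_mem, Nat.card_Ico]
    · omega
    · intro i hi; rw [L8_pad i (mem_Ico.mp hi).1]; decide
  have r1 : ((range 8).filter (fun i => (1:ℕ) ∈ L8 i)).card = 8 := by decide
  have r2 : ((range 8).filter (fun i => (2:ℕ) ∈ L8 i)).card = 4 := by decide
  have r3 : ((range 8).filter (fun i => (3:ℕ) ∈ L8 i)).card = 2 := by decide
  have r4 : ((range 8).filter (fun i => (4:ℕ) ∈ L8 i)).card = 2 := by decide
  have m1 : colorMultiplicity (fun v : Fin (8+2*t) => L8 v.val) 1 = 8 := by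
    rw [hmul 1, splitCard 8 _ (by omega), r1, q1]
  have m2 : colorMultiplicity (fun v : Fin (8+2*t) => L8 v.val) 2 = 4 := by
    rw [hmul 2, splitCard 8 _ (by omega), r2, q2]
  have m3 : colorMultiplicity (fun v : Fin (8+2*t) => L8 v.val) 3 = 2 + 2*t := by
    rw [hmul 3, splitCard 8 _ (by omega), r3, q3]
  have m4 : colorMultiplicity (fun v : Fin (8+2*t) => L8 v.val) 4 = 2 + 2*t := by
    rw [hmul 4, splitCard 8 _ (by omega), r4, q4]
  have d1 := hcnt 1 ⟨⟨0, by omega⟩, show (1:ℕ) ∈ L8 0 by decide⟩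
  have d2 := hcnt 2 ⟨⟨0, by omega⟩, show (2:ℕ) ∈ L8 0 by decide⟩
  have d3 := hcnt 3 ⟨⟨3, by omega⟩, show (3:ℕ) ∈ L8 3 by decide⟩
  have d4 := hcnt 4 ⟨⟨5, by omega⟩, show (4:ℕ) ∈ L8 5 by decide⟩
  rw [hcard 1, splitCard 8 _ (by omega), p1, m1] at d1
  rw [hcard 2, splitCard 8 _ (by omega), p2, m2] at d2
  rw [hcard 3, splitCard 8 _ (by omega), p3, m3] at d3
  rw [hcard 4, splitCard 8 _ (by omega), p4, m4] at d4
  have e1 : ((range 8).filter (fun i => F i = 1)).card = 4 := by omega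
  have e2 : ((range 8).filter (fun i => F i = 2)).card = 2 := by omega
  have e3 : ((range 8).filter (fun i => F i = 3)).card = 1 := by omega
  have e4 : ((range 8).filter (fun i => F i = 4)).card = 1 := by omega
  rw [Finset.card_filter] at e1 e2 e3 e4
  simp only [Finset.sum_range_succ, Finset.sum_range_zero, zero_add] at e1 e2 e3 e4
  exact gadget8 (F 0) (hFmem 0 (by omega)) (F 1) (hFmem 1 (by omega)) (F 2) (hFmem 2 (by omega)) (F 3) (hFmem 3 (by omega)) (F 4) (hFmem 4 (by omega)) (F 5) (hFmem 5 (by omega)) (F 6) (hFmem 6 (by omega)) (F 7) (hFmem 7 (by omega))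
    (hFadj 0 (by omega)) (hFadj 1 (by omega)) (hFadj 2 (by omega)) (hFadj 3 (by omega)) (hFadj 4 (by omega)) (hFadj 5 (by omega)) (hFadj 6 (by omega)) e1 e2 e3 e4

private lemma odd_case (t : ℕ) :
    ¬ ProportionallyChoosable (SimpleGraph.pathGraph (9+2*t)) 2 4 := by
  intro h
  obtain ⟨f, hmem, hadj, hcnt⟩ := h (fun v => L9 v.val) (fun v => L9_card v) (fun v => L9_sub v)
  obtain ⟨F, hFeq⟩ : ∃ F : ℕ → ℕ, ∀ v : Fin (9+2*t), F v.val = f v :=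
    ⟨fun i => if h : i < 9+2*t then f ⟨i, h⟩ else 0, fun v => dif_pos v.isLt⟩
  have hFmem : ∀ i (hi : i < 9+2*t), F i ∈ L9 i := by
    intro i hi
    have h2 := hmem ⟨i, hi⟩
    rwa [← hFeq ⟨i, hi⟩] at h2
  have hFadj : ∀ i, i + 1 < 9+2*t → F i ≠ F (i+1) := by
    intro i hi
    have h2 := hadj ⟨i, by omega⟩ ⟨i+1, hi⟩ (by rw [SimpleGraph.pathGraph_adj]; left; rfl)
    rw [← hFeq ⟨i, by omega⟩, ← hFeq ⟨i+1, hi⟩] at h2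
    exact h2
  have hFpad : ∀ i, 9 ≤ i → i < 9+2*t → (F i = 3 ∨ F i = 4) := by
    intro i h1 h2
    have h3 := hFmem i h2
    rw [L9_pad i h1] at h3
    simpa using h3
  have hcard : ∀ c : ℕ, (Finset.univ.filter (fun v => f v = c)).card
      = ((range (9+2*t)).filter (fun i => F i = c)).card :=
    fun c => filt _ f F hFeq (fun x => x = c)
  have hmul : ∀ c : ℕ, colorMultiplicity (fun v : Fin (9+2*t) => L9 v.val) c
      = ((range (9+2*t)).filter (fun i => c ∈ L9 i)).card :=
    fun c => filt _ _ L9 (fun v => rfl) (fun s => c ∈ s)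
  have p1 : ((Ico 9 (9+2*t)).filter (fun i => F i = 1)).card = 0 := by
    rw [Finset.card_eq_zero, Finset.filter_eq_empty_iff]
    intro i hi
    rcases hFpad i (mem_Ico.mp hi).1 (mem_Ico.mp hi).2 with h|h <;> omega
  have p2 : ((Ico 9 (9+2*t)).filter (fun i => F i = 2)).card = 0 := by
    rw [Finset.card_eq_zero, Finset.filter_eq_empty_iff]
    intro i hi
    rcases hFpad i (mem_Ico.mp hi).1 (mem_Ico.mp hi).2 with h|h <;> omega
  obtain ⟨p3, p4⟩ := padCount F 9 t hFpad (fun i h1 h2 => hFadj i (by omega))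
  have q1 : ((Ico 9 (9+2*t)).filter (fun i => (1:ℕ) ∈ L9 i)).card = 0 := by
    rw [Finset.card_eq_zero, Finset.filter_eq_empty_iff]
    intro i hi
    rw [L9_pad i (mem_Ico.mp hi).1]; decide
  have q2 : ((Ico 9 (9+2*t)).filter (fun i => (2:ℕ) ∈ L9 i)).card = 0 := by
    rw [Finset.card_eq_zero, Finset.filter_eq_empty_iff]
    intro i hi
    rw [L9_pad i (mem_Ico.mp hi).1]; decide
  have q3 : ((Ico 9 (9+2*t)).filter (fun i => (3:ℕ) ∈ L9 i)).card = 2*t := by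
    rw [Finset.filter_true_of_mem, Nat.card_Ico]
    · omega
    · intro i hi; rw [L9_pad i (mem_Ico.mp hi).1]; decide
  have q4 : ((Ico 9 (9+2*t)).filter (fun i => (4:ℕ) ∈ L9 i)).card = 2*t := by
    rw [Finset.filter_true_of_mem, Nat.card_Ico]
    · omega
    · intro i hi; rw [L9_pad i (mem_Ico.mp hi).1]; decide
  have r1 : ((range 9).filter (fun i => (1:ℕ) ∈ L9 i)).card = 8 := by decide
  have r2 : ((range 9).filter (fun i => (2:ℕ) ∈ L9 i)).card = 4 := by decide
  have r3 : ((range 9).filter (fun i => (3:ℕ) ∈ L9 i)).card = 4 := by decide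
  have r4 : ((range 9).filter (fun i => (4:ℕ) ∈ L9 i)).card = 2 := by decide
  have m1 : colorMultiplicity (fun v : Fin (9+2*t) => L9 v.val) 1 = 8 := by
    rw [hmul 1, splitCard 9 _ (by omega), r1, q1]
  have m2 : colorMultiplicity (fun v : Fin (9+2*t) => L9 v.val) 2 = 4 := by
    rw [hmul 2, splitCard 9 _ (by omega), r2, q2]
  have m3 : colorMultiplicity (fun v : Fin (9+2*t) => L9 v.val) 3 = 4 + 2*t := by
    rw [hmul 3, splitCard 9 _ (by omega), r3, q3]
  have m4 : colorMultiplicity (fun v : Fin (9+2*t) => L9 v.val) 4 = 2 + 2*t := by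
    rw [hmul 4, splitCard 9 _ (by omega), r4, q4]
  have d1 := hcnt 1 ⟨⟨0, by omega⟩, show (1:ℕ) ∈ L9 0 by decide⟩
  have d2 := hcnt 2 ⟨⟨0, by omega⟩, show (2:ℕ) ∈ L9 0 by decide⟩
  have d3 := hcnt 3 ⟨⟨1, by omega⟩, show (3:ℕ) ∈ L9 1 by decide⟩
  have d4 := hcnt 4 ⟨⟨5, by omega⟩, show (4:ℕ) ∈ L9 5 by decide⟩
  rw [hcard 1, splitCard 9 _ (by omega), p1, m1] at d1
  rw [hcard 2, splitCard 9 _ (by omega), p2, m2] at d2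
  rw [hcard 3, splitCard 9 _ (by omega), p3, m3] at d3
  rw [hcard 4, splitCard 9 _ (by omega), p4, m4] at d4
  have e1 : ((range 9).filter (fun i => F i = 1)).card = 4 := by omega
  have e2 : ((range 9).filter (fun i => F i = 2)).card = 2 := by omega
  have e3 : ((range 9).filter (fun i => F i = 3)).card = 2 := by omega
  have e4 : ((range 9).filter (fun i => F i = 4)).card = 1 := by omega
  rw [Finset.card_filter] at e1 e2 e3 e4
  simp only [Finset.sum_range_succ, Finset.sum_range_zero, zero_add] at e1 e2 e3 e4
  exact gadget9 (F 0) (hFmem 0 (by omega)) (F 1) (hFmem 1 (by omega)) (F 2) (hFmem 2 (by omega)) (F 3) (hFmem 3 (by omega)) (F 4) (hFmem 4 (by omega)) (F 5) (hFmem 5 (by omega)) (F 6) (hFmem 6 (by omega)) (F 7) (hFmem 7 (by omega)) (F 8) (hFmem 8 (by omega))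
    (hFadj 0 (by omega)) (hFadj 1 (by omega)) (hFadj 2 (by omega)) (hFadj 3 (by omega)) (hFadj 4 (by omega)) (hFadj 5 (by omega)) (hFadj 6 (by omega)) (hFadj 7 (by omega)) e1 e2 e3 e4

/-- For every `n ≥ 8`, `P_n` is not proportionally `(2,4)`-choosable. -/
theorem pathGraph_not_proportionally_24_choosable_of_eight_le (n : ℕ) (hn : 8 ≤ n) :
    ¬ ProportionallyChoosable (SimpleGraph.pathGraph n) 2 4 := by
  rcases Nat.even_or_odd n with ⟨k, hk⟩ | ⟨k, hk⟩
  · have h8 : n = 8 + 2 * (k - 4) := by omega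
    rw [h8]
    exact even_case (k - 4)
  · have h9 : n = 9 + 2 * (k - 4) := by omega
    rw [h9]
    exact odd_case (k - 4)
end

section
/- For every integer n ≥ 3, the cycle C_n on n vertices is not proportionally (2,3)-choosable. -/
open SimpleGraph Finset

lemma adj_succ {n : ℕ} (hn : 2 ≤ n) {i : ℕ} (h : i + 1 < n) :
    (SimpleGraph.cycleGraph n).Adj ⟨i, by omega⟩ ⟨i+1, h⟩ := by
  rw [SimpleGraph.cycleGraph_adj']
  right
  rw [Fin.sub_def]
  simp only
  have h1 : n - i + (i + 1) = 1 + n := by omega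
  rw [h1, Nat.add_mod_right, Nat.mod_eq_of_lt (by omega)]

lemma adj_last {n : ℕ} (hn : 2 ≤ n) :
    (SimpleGraph.cycleGraph n).Adj ⟨n-1, by omega⟩ ⟨0, by omega⟩ := by
  rw [SimpleGraph.cycleGraph_adj']
  right
  rw [Fin.sub_def]
  simp only
  have h1 : n - (n-1) + 0 = 1 := by omega
  rw [h1, Nat.mod_eq_of_lt (by omega)]

lemma alt {n : ℕ} (hn : 3 ≤ n) (f : Fin n → ℕ)
    (hadj : ∀ u v, (cycleGraph n).Adj u v → f u ≠ f v)
    (a : ℕ) (ha : a < n)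
    (hv : ∀ k (hk : k < n), a ≤ k → f ⟨k, hk⟩ = 1 ∨ f ⟨k, hk⟩ = 2) :
    ∀ k (hk : k < n), a ≤ k →
      f ⟨k, hk⟩ = if (k - a) % 2 = 0 then f ⟨a, ha⟩ else 3 - f ⟨a, ha⟩ := by
  intro k
  induction k with
  | zero =>
    intro hk hak
    have : a = 0 := by omega
    subst this
    simp
  | succ k ih =>
    intro hk hak
    rcases Nat.lt_or_ge k (a) with hlt | hge
    · have : a = k + 1 := by omega
      subst this
      simp
    · have hk' : k < n := by omega
      have hrec := ih hk' hge
      have hne := hadj _ _ (adj_succ (by omega) hk)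
      have h1 := hv k hk' hge
      have h2 := hv (k+1) hk hak
      have h0 := hv a ha le_rfl
      rw [hrec] at h1 hne
      split_ifs at * <;> omega

lemma card_odd_fin (n : ℕ) :
    ((univ : Finset (Fin n)).filter (fun v => v.val % 2 = 1)).card = n / 2 := by
  rw [Finset.card_filter]
  rw [Fin.sum_univ_eq_sum_range (fun i => if i % 2 = 1 then 1 else 0)]
  induction n with
  | zero => simp
  | succ m ih =>
    rw [Finset.sum_range_succ, ih]
    split_ifs <;> omega

/-- For every `n ≥ 3`, the cycle `C_n` is not proportionally `(2,3)`-choosable. -/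
theorem cycleGraph_not_proportionally_23_choosable (n : ℕ) (hn : 3 ≤ n) :
    ¬ ProportionallyChoosable (SimpleGraph.cycleGraph n) 2 3 := by
  intro hch
  have h0 : 0 < n := by omega
  have h1 : 1 < n := by omega
  have h2 : 2 < n := by omega
  rcases Nat.even_or_odd n with he | ho
  · -- even case
    have h4 : 4 ≤ n := by
      rcases he with ⟨m, hm⟩; omega
    have h3 : 3 < n := by omega
    set L : Fin n → Finset ℕ :=
      fun v => if v.val = 0 ∨ v.val = 2 then ({1,3} : Finset ℕ) else ({1,2} : Finset ℕ) with hL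
    have hcard : ∀ v, (L v).card = 2 := by
      intro v; simp only [hL]; split_ifs <;> decide
    have hsub : ∀ v, L v ⊆ Finset.Icc 1 3 := by
      intro v; simp only [hL]; split_ifs <;> intro x hx <;> simp at hx <;>
        rcases hx with h | h <;> subst h <;> decide
    obtain ⟨f, hfL, hfadj, hfcnt⟩ := hch L hcard hsub
    -- list membership facts
    have hf02 : ∀ (k : ℕ) (hk : k < n), k = 0 ∨ k = 2 →
        f ⟨k, hk⟩ = 1 ∨ f ⟨k, hk⟩ = 3 := by
      intro k hk hk02
      have := hfL ⟨k, hk⟩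
      simp only [hL] at this
      rw [if_pos hk02] at this
      simpa using this
    have hfo : ∀ (k : ℕ) (hk : k < n), ¬(k = 0 ∨ k = 2) →
        f ⟨k, hk⟩ = 1 ∨ f ⟨k, hk⟩ = 2 := by
      intro k hk hk02
      have := hfL ⟨k, hk⟩
      simp only [hL] at this
      rw [if_neg hk02] at this
      simpa using this
    -- the special pair
    have hpair : (univ : Finset (Fin n)).filter (fun v => v.val = 0 ∨ v.val = 2)
        = {⟨0, h0⟩, ⟨2, h2⟩} := by
      ext v
      simp [Fin.ext_iff]
    have hpaircard : ({⟨0, h0⟩, ⟨2, h2⟩} : Finset (Fin n)).card = 2 := by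
      rw [Finset.card_pair]
      simp [Fin.ext_iff]
    -- multiplicity of 3
    have hm3 : colorMultiplicity L 3 = 2 := by
      unfold colorMultiplicity
      have : (univ : Finset (Fin n)).filter (fun v => 3 ∈ L v)
          = (univ : Finset (Fin n)).filter (fun v => v.val = 0 ∨ v.val = 2) := by
        apply Finset.filter_congr
        intro v _
        simp only [hL]
        split_ifs with h <;> simp [h]
      rw [this, hpair, hpaircard]
    -- multiplicity of 2
    have hm2 : colorMultiplicity L 2 = n - 2 := by
      unfold colorMultiplicity
      have heq : (univ : Finset (Fin n)).filter (fun v => 2 ∈ L v)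
          = (univ : Finset (Fin n)).filter (fun v => ¬(v.val = 0 ∨ v.val = 2)) := by
        apply Finset.filter_congr
        intro v _
        simp only [hL]
        split_ifs with h <;> simp [h]
      rw [heq, Finset.filter_not, Finset.card_sdiff_of_subset (Finset.filter_subset _ _),
        hpair, hpaircard]
      simp
    -- exactly one vertex colored 3
    have hc3 := hfcnt 3 ⟨⟨0, h0⟩, by simp [hL]⟩
    rw [hm3] at hc3
    norm_num at hc3
    obtain ⟨w, hw⟩ := Finset.card_eq_one.mp hc3
    have hwmem : w ∈ ({⟨0, h0⟩, ⟨2, h2⟩} : Finset (Fin n)) := by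
      have hw3 : f w = 3 := by
        have : w ∈ (univ : Finset (Fin n)).filter (fun v => f v = 3) := by
          rw [hw]; simp
        simpa using this
      by_cases hcase : w.val = 0 ∨ w.val = 2
      · rcases hcase with h | h
        · simp [show w = (⟨0,h0⟩ : Fin n) from Fin.ext h]
        · simp [show w = (⟨2,h2⟩ : Fin n) from Fin.ext h]
      · exfalso
        have := hfo w.val w.isLt hcase
        simp [Fin.eta, hw3] at this
    have hw3 : f w = 3 := by
      have : w ∈ (univ : Finset (Fin n)).filter (fun v => f v = 3) := by
        rw [hw]; simp
      simpa using this
    have hnot3 : ∀ v : Fin n, v ≠ w → f v ≠ 3 := by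
      intro v hv hfv
      have : v ∈ (univ : Finset (Fin n)).filter (fun v => f v = 3) := by simp [hfv]
      rw [hw] at this
      simp at this
      exact hv this
    have hchar : ∀ v : Fin n, f v = 2 ↔ v.val % 2 = 1 := by
      simp only [Finset.mem_insert, Finset.mem_singleton] at hwmem
      rcases hwmem with hwe | hwe
      · -- w = ⟨0⟩ : f 0 = 3
        subst hwe
        have hf2 : f ⟨2, h2⟩ = 1 := by
          have hne : (⟨2, h2⟩ : Fin n) ≠ ⟨0, h0⟩ := by simp [Fin.ext_iff]
          have := hnot3 ⟨2, h2⟩ hne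
          rcases hf02 2 h2 (Or.inr rfl) with h | h <;> omega
        have hv1 : ∀ k (hk : k < n), 1 ≤ k → f ⟨k, hk⟩ = 1 ∨ f ⟨k, hk⟩ = 2 := by
          intro k hk hk1
          by_cases hk2 : k = 2
          · subst hk2; left; exact hf2
          · exact hfo k hk (by omega)
        have halt := alt hn f hfadj 1 h1 hv1
        have hf1 : f ⟨1, h1⟩ = 2 := by
          have e2 := halt 2 h2 (by omega)
          norm_num at e2
          have := hv1 1 h1 le_rfl
          omega
        intro v
        obtain ⟨k, hk⟩ := v
        simp only [Fin.val_mk]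
        by_cases hk0 : k = 0
        · subst hk0
          have : f (⟨0, hk⟩ : Fin n) = 3 := hw3
          omega
        · have e := halt k hk (by omega)
          rw [hf1] at e
          split_ifs at e with hpar <;> omega
      · -- w = ⟨2⟩ : f 2 = 3
        subst hwe
        have hf0 : f ⟨0, h0⟩ = 1 := by
          have hne : (⟨0, h0⟩ : Fin n) ≠ ⟨2, h2⟩ := by simp [Fin.ext_iff]
          have := hnot3 ⟨0, h0⟩ hne
          rcases hf02 0 h0 (Or.inl rfl) with h | h <;> omega
        have hf1 : f ⟨1, h1⟩ = 2 := by
          have hne01 := hfadj _ _ (adj_succ (n := n) (by omega) (i := 0) (by omega))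
          norm_num at hne01
          have := hfo 1 h1 (by omega)
          omega
        have hflast : f ⟨n-1, by omega⟩ = 2 := by
          have hne := hfadj _ _ (adj_last (n := n) (by omega))
          have := hfo (n-1) (by omega) (by omega)
          omega
        have hv3 : ∀ k (hk : k < n), 3 ≤ k → f ⟨k, hk⟩ = 1 ∨ f ⟨k, hk⟩ = 2 := by
          intro k hk hk3
          exact hfo k hk (by omega)
        have halt := alt hn f hfadj 3 h3 hv3
        have hf3 : f ⟨3, h3⟩ = 2 := by
          have e := halt (n-1) (by omega) (by omega)
          have hmod : (n - 1 - 3) % 2 = 0 := by obtain ⟨m, hm⟩ := he; omega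
          rw [if_pos hmod] at e
          rw [hflast] at e
          exact e.symm
        intro v
        obtain ⟨k, hk⟩ := v
        simp only [Fin.val_mk]
        by_cases hk0 : k = 0
        · subst hk0; omega
        by_cases hk1 : k = 1
        · subst hk1; omega
        by_cases hk2 : k = 2
        · subst hk2
          have : f (⟨2, hk⟩ : Fin n) = 3 := hw3
          omega
        · have e := halt k hk (by omega)
          rw [hf3] at e
          split_ifs at e with hpar <;> omega
    have hfe : (univ : Finset (Fin n)).filter (fun v => f v = 2)
        = (univ : Finset (Fin n)).filter (fun v => v.val % 2 = 1) := by
      apply Finset.filter_congr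
      intro v _
      exact hchar v
    have hc2 := hfcnt 2 ⟨⟨1, h1⟩, by simp [hL]⟩
    rw [hm2, hfe, card_odd_fin] at hc2
    obtain ⟨m, hm⟩ := he
    omega
  · -- odd case
    set L : Fin n → Finset ℕ := fun _ => ({1,2} : Finset ℕ) with hL
    obtain ⟨f, hfL, hfadj, hfcnt⟩ := hch L (fun v => by simp [hL])
      (fun v => by intro x hx; simp [hL] at hx; rcases hx with h | h <;> subst h <;> decide)
    have hv : ∀ k (hk : k < n), 0 ≤ k → f ⟨k, hk⟩ = 1 ∨ f ⟨k, hk⟩ = 2 := by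
      intro k hk _
      have := hfL ⟨k, hk⟩
      simpa [hL] using this
    have halt := alt hn f hfadj 0 h0 hv (n-1) (by omega) (by omega)
    have hmod : (n - 1 - 0) % 2 = 0 := by obtain ⟨m, hm⟩ := ho; omega
    rw [if_pos hmod] at halt
    exact hfadj _ _ (adj_last (by omega)) halt
end
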